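/- Let D ⊆ ℝ^n be Clarke regular at 0 ∈ D and let C ⊆ ℝ^n be a compact convex set with C ⊆ T_D(0) and int(T_D(0)) ≠ ∅. Let v ∈ int(T_D(0)). Then for all sufficiently small δ > 0 there exists ε̄ > 0 such that C + δv + δ²𝔹 ⊆ (1/ε)·D for all ε ∈ (0, ε̄], where 𝔹 is the closed unit ball of ℝ^n. -/

import Mathlib

open Set Filter Topology Bornology Pointwise RealInnerProductSpace

noncomputable section

/-- The (Bouligand) tangent cone of `C` at `xbar`. -/
def tanCone {n : ℕ} (C : Set (EuclideanSpace ℝ (Fin n))) (xbar : EuclideanSpace ℝ (Fin n)) :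
    Set (EuclideanSpace ℝ (Fin n)) :=
  {w | ∃ (xs : ℕ → EuclideanSpace ℝ (Fin n)) (ts : ℕ → ℝ),
    (∀ j, xs j ∈ C) ∧ (∀ j, 0 < ts j) ∧
    Tendsto ts atTop (𝓝 0) ∧ Tendsto xs atTop (𝓝 xbar) ∧
    Tendsto (fun j => (ts j)⁻¹ • (xs j - xbar)) atTop (𝓝 w)}

/-- Regular normals: `⟪v, x - xbar⟫ ≤ o(‖x - xbar‖)` for `x ∈ C`. -/
def regNormal {n : ℕ} (C : Set (EuclideanSpace ℝ (Fin n))) (xbar : EuclideanSpace ℝ (Fin n)) :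
    Set (EuclideanSpace ℝ (Fin n)) :=
  {v | ∀ ε > 0, ∃ δ > 0, ∀ x ∈ C, ‖x - xbar‖ < δ → ⟪v, x - xbar⟫ ≤ ε * ‖x - xbar‖}

/-- General normals: limits of regular normals at nearby points of `C`. -/
def genNormal {n : ℕ} (C : Set (EuclideanSpace ℝ (Fin n))) (xbar : EuclideanSpace ℝ (Fin n)) :
    Set (EuclideanSpace ℝ (Fin n)) :=
  {v | ∃ xs vs : ℕ → EuclideanSpace ℝ (Fin n),
    (∀ j, xs j ∈ C) ∧ (∀ j, vs j ∈ regNormal C (xs j)) ∧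
    Tendsto xs atTop (𝓝 xbar) ∧ Tendsto vs atTop (𝓝 v)}

/-- Clarke regularity: local closedness at `xbar` and all normals are regular. -/
def ClarkeRegularAt {n : ℕ} (C : Set (EuclideanSpace ℝ (Fin n)))
    (xbar : EuclideanSpace ℝ (Fin n)) : Prop :=
  (∃ U ∈ 𝓝 xbar, IsClosed (C ∩ U)) ∧ genNormal C xbar = regNormal C xbar

/-!
Regular normals are polar to the tangent cone. Hence, if `closedBall v ρ ⊆ T_D(0)` and
`δ ≤ ρ / 2`, every unit regular normal `u` at `0` satisfies `⟪u, z⟫ ≤ -δρ/2` on the compact set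
`K = C + δv + δ²𝔹`. Suppose `ε • z ∉ D` for arbitrarily small `ε` and some `z ∈ K`. Along the
segment from `0` to `p = ε • z` pick a point, after the last one in `D`, where the distance to `D`
decreases at rate at most `γ = εδρ/4`; the unit proximal normal at its nearest point of `D` then
satisfies `⟪u, z⟫ ≥ -δρ/4`. These nearest points tend to `0`, so a limit of such normals is a
general normal at `0`, hence by Clarke regularity a regular one, contradicting the first bound.
-/

open Metric

theorem exists_isClosed_inter_closedBall {X : Type*} [PseudoMetricSpace X] {s : Set X} {x : X}
    (h : ∃ U ∈ 𝓝 x, IsClosed (s ∩ U)) : ∃ r > 0, IsClosed (s ∩ closedBall x r) := by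
  obtain ⟨U, hU, hcl⟩ := h
  obtain ⟨r, hr, hrU⟩ := nhds_basis_closedBall.mem_iff.1 hU
  refine ⟨r, hr, ?_⟩
  rw [← inter_eq_right.2 hrU, ← inter_assoc]
  exact hcl.inter isClosed_closedBall

section InnerProductSpace

variable {F : Type*} [NormedAddCommGroup F] [InnerProductSpace ℝ F]

theorem neg_mul_norm_le_inner_of_eventually_norm_le {w p : F} {γ : ℝ}
    (h : ∀ᶠ s in 𝓝[>] (0 : ℝ), ‖w‖ ≤ ‖w + s • p‖ + γ * s) : -(γ * ‖w‖) ≤ ⟪w, p⟫ := by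
  rcases eq_or_ne w 0 with rfl | hw
  · simp
  have hsmall : ∀ᶠ s in 𝓝[>] (0 : ℝ), γ * s < ‖w‖ :=
    nhdsWithin_le_nhds <| (continuous_const_mul γ).tendsto' 0 0 (mul_zero γ) |>.eventually
      (gt_mem_nhds (norm_pos_iff.2 hw))
  have hlim : Tendsto (fun s : ℝ => ⟪w, p⟫ + s * ‖p‖ ^ 2 / 2) (𝓝[>] 0) (𝓝 ⟪w, p⟫) :=
    tendsto_nhdsWithin_of_tendsto_nhds <|
      (by fun_prop : Continuous fun s : ℝ => ⟪w, p⟫ + s * ‖p‖ ^ 2 / 2).tendsto' 0 _ (by simp)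
  refine ge_of_tendsto hlim ?_
  filter_upwards [h, hsmall, self_mem_nhdsWithin] with s hs hγs (hs0 : 0 < s)
  -- square `‖w‖ - γ s ≤ ‖w + s p‖` and divide by `2 s`
  have hsq : (‖w‖ - γ * s) ^ 2 ≤ ‖w‖ ^ 2 + 2 * s * ⟪w, p⟫ + s ^ 2 * ‖p‖ ^ 2 := by
    have := pow_le_pow_left₀ (by linarith) (by linarith : ‖w‖ - γ * s ≤ ‖w + s • p‖) 2
    rwa [norm_add_sq_real, real_inner_smul_right, norm_smul, Real.norm_eq_abs, mul_pow, sq_abs,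
      ← mul_assoc] at this
  nlinarith [sq_nonneg (γ * s)]

variable [ProperSpace F]

theorem exists_smul_nearest_inner_ge {D : Set F} (hD : IsClosed D) (h0 : (0 : F) ∈ D)
    {p : F} (hp : p ∉ D) {γ : ℝ} (hγ : 0 < γ) :
    ∃ τ ∈ Icc (0 : ℝ) 1, ∃ y ∈ D, (∀ x ∈ D, ‖τ • p - y‖ ≤ ‖τ • p - x‖) ∧ τ • p - y ≠ 0 ∧
      -(γ * ‖τ • p - y‖) ≤ ⟪τ • p - y, p⟫ := by
  set f : ℝ → ℝ := fun τ => infDist (τ • p) D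
  have hf : Continuous f := (continuous_infDist_pt D).comp (continuous_id.smul continuous_const)
  have hf1 : 0 < f 1 := by simpa [f] using (hD.notMem_iff_infDist_pos ⟨0, h0⟩).1 hp
  -- `τ₀` is the last time the segment `[0, p]` meets `D`
  obtain ⟨τ₀, ⟨⟨hτ₀0, hτ₀1⟩, hfτ₀ : f τ₀ = 0⟩, hτ₀max⟩ :=
    (isCompact_Icc.inter_right (isClosed_singleton.preimage hf)).exists_isGreatest
      ⟨0, ⟨le_rfl, zero_le_one⟩, show f 0 = 0 by simp [f, infDist_zero_of_mem h0]⟩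
  have hfpos : ∀ τ ∈ Ioc τ₀ 1, 0 < f τ := fun τ ⟨hτ₀τ, hτ1⟩ =>
    infDist_nonneg.lt_of_ne fun h => (hτ₀max ⟨⟨by linarith, hτ1⟩, h.symm⟩).not_gt hτ₀τ
  have hτ₀1' : τ₀ < 1 := hτ₀1.lt_of_ne fun h => hf1.ne' (h ▸ hfτ₀)
  set G : ℝ → ℝ := fun τ => f τ + γ * τ
  have hG : Continuous G := by fun_prop
  -- minimizing `G` to the right of `τ₀` gives a point where `f` does not decrease faster than `γ`
  obtain ⟨σ, ⟨hτ₀σ, hσ1⟩, hGσ⟩ : ∃ σ ∈ Ioo τ₀ 1, G σ < G 1 := by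
    have hlt : G τ₀ < G 1 := by simp only [G, hfτ₀]; nlinarith
    exact (Filter.Eventually.and (Ioo_mem_nhdsGT hτ₀1')
      (nhdsWithin_le_nhds (hG.continuousAt.eventually (gt_mem_nhds hlt)))).exists
  obtain ⟨τ, ⟨hστ, hτ1⟩, hτmin⟩ :=
    isCompact_Icc.exists_isMinOn (nonempty_Icc.2 hσ1.le) hG.continuousOn
  have hτ1' : τ < 1 := hτ1.lt_of_ne fun h =>
    (h ▸ hτmin : IsMinOn G (Icc σ 1) 1) ⟨le_rfl, hσ1.le⟩ |>.not_gt hGσ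
  obtain ⟨y, hy, hfy⟩ := hD.exists_infDist_eq_dist ⟨0, h0⟩ (τ • p)
  have hfτ : f τ = ‖τ • p - y‖ := hfy.trans (dist_eq_norm _ _)
  refine ⟨τ, ⟨by linarith, hτ1⟩, y, hy, fun x hx => ?_, ?_, ?_⟩
  · rw [← dist_eq_norm, ← dist_eq_norm, ← hfy]
    exact infDist_le_dist_of_mem hx
  · rw [← norm_pos_iff, ← hfτ]
    exact hfpos τ ⟨by linarith, hτ1⟩
  · refine neg_mul_norm_le_inner_of_eventually_norm_le ?_
    filter_upwards [Ioo_mem_nhdsGT (sub_pos.2 hτ1')] with s ⟨hs0, hs1⟩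
    have hmin : G τ ≤ G (τ + s) := hτmin ⟨by linarith, by linarith⟩
    have hnear : f (τ + s) ≤ ‖τ • p - y + s • p‖ :=
      calc f (τ + s) ≤ dist ((τ + s) • p) y := infDist_le_dist_of_mem hy
        _ = ‖τ • p - y + s • p‖ := by rw [dist_eq_norm, add_smul]; abel_nf
    simp only [G] at hmin
    linarith

end InnerProductSpace

section Euclidean

variable {n : ℕ}

local notation "E" => EuclideanSpace ℝ (Fin n)

theorem smul_mem_regNormal {D : Set E} {y u : E} {c : ℝ} (hc : 0 < c)
    (hu : u ∈ regNormal D y) : c • u ∈ regNormal D y := by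
  intro ε hε
  obtain ⟨δ, hδ, h⟩ := hu (ε / c) (by positivity)
  refine ⟨δ, hδ, fun x hx hxy => ?_⟩
  calc ⟪c • u, x - y⟫ = c * ⟪u, x - y⟫ := real_inner_smul_left _ _ _
    _ ≤ c * (ε / c * ‖x - y‖) := mul_le_mul_of_nonneg_left (h x hx hxy) hc.le
    _ = ε * ‖x - y‖ := by field_simp

theorem sub_mem_regNormal_of_forall_norm_le {D : Set E} {y q : E} {δ : ℝ} (hδ : 0 < δ)
    (h : ∀ x ∈ D, ‖x - y‖ < δ → ‖q - y‖ ≤ ‖q - x‖) : q - y ∈ regNormal D y := by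
  intro ε hε
  refine ⟨min δ (2 * ε), by positivity, fun x hx hxy => ?_⟩
  have hclose : ‖x - y‖ < 2 * ε := hxy.trans_le (min_le_right _ _)
  have hexpand : ‖q - x‖ ^ 2 = ‖q - y‖ ^ 2 - 2 * ⟪q - y, x - y⟫ + ‖x - y‖ ^ 2 := by
    rw [show q - x = (q - y) - (x - y) by abel, norm_sub_sq_real]
  nlinarith [pow_le_pow_left₀ (norm_nonneg _) (h x hx (hxy.trans_le (min_le_left _ _))) 2,
    norm_nonneg (x - y)]

theorem inner_nonpos_of_mem_regNormal_of_mem_tanCone {D : Set E} {xbar u w : E}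
    (hu : u ∈ regNormal D xbar) (hw : w ∈ tanCone D xbar) : ⟪u, w⟫ ≤ 0 := by
  obtain ⟨xs, ts, hxs, hts, -, hxto, hwto⟩ := hw
  have hle : ∀ ε > 0, ⟪u, w⟫ ≤ ε * ‖w‖ := by
    intro ε hε
    obtain ⟨δ, hδ, h⟩ := hu ε hε
    refine le_of_tendsto_of_tendsto (tendsto_const_nhds.inner hwto) (hwto.norm.const_mul ε) ?_
    filter_upwards [tendsto_iff_norm_sub_tendsto_zero.1 hxto |>.eventually (gt_mem_nhds hδ)]
      with j hj
    have hinv : 0 ≤ (ts j)⁻¹ := (inv_pos.2 (hts j)).le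
    rw [real_inner_smul_right, norm_smul, Real.norm_of_nonneg hinv, mul_left_comm]
    exact mul_le_mul_of_nonneg_left (h _ (hxs j) hj) hinv
  refine ge_of_tendsto (x := 𝓝[>] 0) (tendsto_nhdsWithin_of_tendsto_nhds ?_)
    (eventually_nhdsWithin_of_forall hle)
  simpa using (continuous_mul_const ‖w‖).tendsto 0

theorem inner_le_neg_of_closedBall_subset_tanCone {D : Set E} {u v : E} {ρ : ℝ} (hρ : 0 ≤ ρ)
    (hu : u ∈ regNormal D 0) (hball : closedBall v ρ ⊆ tanCone D 0) : ⟪u, v⟫ ≤ -(ρ * ‖u‖) := by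
  rcases eq_or_ne u 0 with rfl | hu0
  · simp
  have hnorm : 0 < ‖u‖ := norm_pos_iff.2 hu0
  have hmem : v + (ρ / ‖u‖) • u ∈ closedBall v ρ := by
    rw [mem_closedBall, dist_eq_norm, add_sub_cancel_left, norm_smul, Real.norm_eq_abs,
      abs_div, abs_norm, div_mul_cancel₀ _ hnorm.ne', abs_of_nonneg hρ]
  have := inner_nonpos_of_mem_regNormal_of_mem_tanCone hu (hball hmem)
  rw [inner_add_right, real_inner_smul_right, real_inner_self_eq_norm_sq] at this
  field_simp at this
  linarith

theorem exists_unit_regNormal_inner_ge {D : Set E} {r : ℝ} (hDr : IsClosed (D ∩ closedBall 0 r))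
    (h0 : (0 : E) ∈ D) {p : E} (hp : p ∉ D) (hpr : 2 * ‖p‖ < r) {γ : ℝ} (hγ : 0 < γ) :
    ∃ y ∈ D, ‖y‖ ≤ 2 * ‖p‖ ∧ ∃ u ∈ regNormal D y, ‖u‖ = 1 ∧ -γ ≤ ⟪u, p⟫ := by
  have h0r : (0 : E) ∈ D ∩ closedBall 0 r := ⟨h0, mem_closedBall_self (by linarith [norm_nonneg p])⟩
  obtain ⟨τ, ⟨hτ0, hτ1⟩, y, ⟨hy, -⟩, hnearest, hw0, hinner⟩ :=
    exists_smul_nearest_inner_ge hDr h0r (fun h => hp h.1) hγ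
  set w := τ • p - y
  have hτp : ‖τ • p‖ ≤ ‖p‖ := by
    rw [norm_smul, Real.norm_of_nonneg hτ0]
    exact mul_le_of_le_one_left (norm_nonneg p) hτ1
  have hwp : ‖w‖ ≤ ‖p‖ := (sub_zero (τ • p) ▸ hnearest 0 h0r).trans hτp
  have hy2 : ‖y‖ ≤ 2 * ‖p‖ :=
    calc ‖y‖ = ‖τ • p - w‖ := by rw [sub_sub_cancel]
      _ ≤ ‖τ • p‖ + ‖w‖ := norm_sub_le _ _
      _ ≤ 2 * ‖p‖ := by linarith
  have hwnormal : w ∈ regNormal D y := by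
    refine sub_mem_regNormal_of_forall_norm_le (sub_pos.2 hpr) fun x hx hxy => hnearest x ⟨hx, ?_⟩
    rw [mem_closedBall_zero_iff]
    calc ‖x‖ = ‖y + (x - y)‖ := by rw [add_sub_cancel]
      _ ≤ ‖y‖ + ‖x - y‖ := norm_add_le _ _
      _ ≤ r := by linarith
  have hwpos : 0 < ‖w‖ := norm_pos_iff.2 hw0
  refine ⟨y, hy, hy2, ‖w‖⁻¹ • w, smul_mem_regNormal (inv_pos.2 hwpos) hwnormal,
    norm_smul_inv_norm hw0, ?_⟩
  rw [real_inner_smul_left, le_inv_mul_iff₀ hwpos]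
  linarith

theorem exists_unit_regNormal_inner_ge_of_forall_pos {D K : Set E} (hK : IsCompact K)
    (hreg : genNormal D 0 ⊆ regNormal D 0) {a : ℝ}
    (h : ∀ η > 0, ∃ y ∈ D, ‖y‖ < η ∧ ∃ u ∈ regNormal D y, ‖u‖ = 1 ∧ ∃ z ∈ K, a ≤ ⟪u, z⟫) :
    ∃ u ∈ regNormal D 0, ‖u‖ = 1 ∧ ∃ z ∈ K, a ≤ ⟪u, z⟫ := by
  choose y hy hyη u hu hu1 z hz hle using fun j : ℕ => h (1 / (j + 1)) Nat.one_div_pos_of_nat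
  have hy0 : Tendsto y atTop (𝓝 0) :=
    squeeze_zero_norm (fun j => (hyη j).le) tendsto_one_div_add_atTop_nhds_zero_nat
  obtain ⟨⟨u₀, z₀⟩, ⟨hu₀, hz₀⟩, φ, hφ, hlim⟩ :=
    ((isCompact_sphere (0 : E) 1).prod hK).tendsto_subseq (x := fun j => (u j, z j))
      fun j => ⟨mem_sphere_zero_iff_norm.2 (hu1 j), hz j⟩
  have hulim : Tendsto (u ∘ φ) atTop (𝓝 u₀) := (continuous_fst.tendsto _).comp hlim
  have hzlim : Tendsto (z ∘ φ) atTop (𝓝 z₀) := (continuous_snd.tendsto _).comp hlim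
  exact ⟨u₀, hreg ⟨y ∘ φ, u ∘ φ, fun j => hy _, fun j => hu _, hy0.comp hφ.tendsto_atTop, hulim⟩,
    mem_sphere_zero_iff_norm.1 hu₀, z₀, hz₀,
    ge_of_tendsto (hulim.inner hzlim) (Eventually.of_forall fun j => hle _)⟩

theorem exists_smul_mem_of_inner_le_neg {D K : Set E} (hD0 : (0 : E) ∈ D)
    (hDreg : ClarkeRegularAt D 0) (hK : IsCompact K) {c : ℝ} (hc : 0 < c)
    (hpolar : ∀ z ∈ K, ∀ u ∈ regNormal D 0, ‖u‖ = 1 → ⟪u, z⟫ ≤ -c) :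
    ∃ εbar > (0 : ℝ), ∀ ε : ℝ, 0 < ε → ε ≤ εbar → ∀ z ∈ K, ε • z ∈ D := by
  obtain ⟨r, hr, hDr⟩ := exists_isClosed_inter_closedBall hDreg.1
  obtain ⟨R, hR, hKR⟩ := hK.isBounded.exists_pos_norm_le
  by_contra! hbad
  -- each bad `ε • z` gives, near `0`, a unit regular normal `u` with `⟪u, z⟫ ≥ -c / 2`
  obtain ⟨u, hu, hu1, z, hz, hle⟩ := exists_unit_regNormal_inner_ge_of_forall_pos hK hDreg.2.le
    (a := -(c / 2)) fun η hη => by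
      obtain ⟨ε, hε, hεle, z, hz, hzD⟩ := hbad (min η r / (4 * R)) (by positivity)
      have hsmall : 2 * ‖ε • z‖ < min η r :=
        calc 2 * ‖ε • z‖ = 2 * (ε * ‖z‖) := by rw [norm_smul, Real.norm_of_nonneg hε.le]
          _ ≤ 2 * (min η r / (4 * R) * R) := by gcongr; exact hKR z hz
          _ < min η r := by field_simp; linarith [lt_min hη hr]
      obtain ⟨y, hy, hyε, u, hu, hu1, hinner⟩ := exists_unit_regNormal_inner_ge hDr hD0 hzD
        (hsmall.trans_le (min_le_right _ _)) (γ := ε * c / 2) (by positivity)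
      refine ⟨y, hy, hyε.trans_lt (hsmall.trans_le (min_le_left _ _)), u, hu, hu1, z, hz, ?_⟩
      rw [real_inner_smul_right] at hinner
      nlinarith
  linarith [hpolar z hz u hu hu1]

end Euclidean

theorem compact_sets_in_convex_cones_general {n : ℕ}
    (D C : Set (EuclideanSpace ℝ (Fin n))) (v : EuclideanSpace ℝ (Fin n))
    (hD0 : (0 : EuclideanSpace ℝ (Fin n)) ∈ D)
    (hDreg : ClarkeRegularAt D 0)
    (hCcomp : IsCompact C)
    (hCsub : C ⊆ tanCone D 0)
    (hv : v ∈ interior (tanCone D 0)) :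
    ∃ δ₀ > (0:ℝ), ∀ δ : ℝ, 0 < δ → δ ≤ δ₀ →
      ∃ εbar > (0:ℝ), ∀ ε : ℝ, 0 < ε → ε ≤ εbar →
        ∀ x ∈ C, ∀ u ∈ Metric.closedBall (0 : EuclideanSpace ℝ (Fin n)) 1,
          x + δ • v + δ ^ 2 • u ∈ ε⁻¹ • D := by
  obtain ⟨ρ, hρ, hball⟩ := nhds_basis_closedBall.mem_iff.1 (mem_interior_iff_mem_nhds.1 hv)
  refine ⟨ρ / 2, by positivity, fun δ hδ hδρ => ?_⟩
  set K := (fun q : EuclideanSpace ℝ (Fin n) × EuclideanSpace ℝ (Fin n) =>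
    q.1 + δ • v + δ ^ 2 • q.2) '' (C ×ˢ closedBall 0 1)
  have hK : IsCompact K := (hCcomp.prod (isCompact_closedBall 0 1)).image (by fun_prop)
  have hpolar : ∀ z ∈ K, ∀ u ∈ regNormal D 0, ‖u‖ = 1 → ⟪u, z⟫ ≤ -(δ * ρ / 2) := by
    rintro _ ⟨⟨x, b⟩, ⟨hx, hb⟩, rfl⟩ u hu hu1
    have hux := inner_nonpos_of_mem_regNormal_of_mem_tanCone hu (hCsub hx)
    have huv := inner_le_neg_of_closedBall_subset_tanCone hρ.le hu hball
    have hub : ⟪u, b⟫ ≤ 1 := (real_inner_le_norm u b).trans (by simpa [hu1] using hb)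
    simp only [inner_add_right, real_inner_smul_right, hu1] at huv ⊢
    nlinarith
  obtain ⟨εbar, hεbar, hsmul⟩ := exists_smul_mem_of_inner_le_neg hD0 hDreg hK (by positivity) hpolar
  exact ⟨εbar, hεbar, fun ε hε hεle x hx u hu =>
    (mem_inv_smul_set_iff₀ hε.ne' _ _).2 (hsmul ε hε hεle _ ⟨(x, u), ⟨hx, hu⟩, rfl⟩)⟩

/-- compact convex sets in the interior of the tangent cone
(Lemma `lem:compex-sets-in-intr`). -/
theorem compact_sets_in_convex_cones {n : ℕ}
    (D C : Set (EuclideanSpace ℝ (Fin n))) (v : EuclideanSpace ℝ (Fin n))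
    (hD0 : (0 : EuclideanSpace ℝ (Fin n)) ∈ D)
    (hDreg : ClarkeRegularAt D 0)
    (hCcomp : IsCompact C) (hCconv : Convex ℝ C)
    (hint : (interior (tanCone D 0)).Nonempty)
    (hCsub : C ⊆ tanCone D 0)
    (hv : v ∈ interior (tanCone D 0)) :
    ∃ δ₀ > (0:ℝ), ∀ δ : ℝ, 0 < δ → δ ≤ δ₀ →
      ∃ εbar > (0:ℝ), ∀ ε : ℝ, 0 < ε → ε ≤ εbar →
        ∀ x ∈ C, ∀ u ∈ Metric.closedBall (0 : EuclideanSpace ℝ (Fin n)) 1,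
          x + δ • v + δ ^ 2 • u ∈ ε⁻¹ • D :=
  compact_sets_in_convex_cones_general D C v hD0 hDreg hCcomp hCsub hv
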